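/- Let p_{XY} be a pmf on X×Y (X, Y finite) with strictly positive marginals, ε ∈ [0,1], and let p_{XYZ} be the corresponding erasure source, so |Z| = |X|·|Y| + 1. Then B₀(X;Y‖Z) = 0 if and only if ε ≤ ε₃, where ε₃ is the maximum of Σ_{t=1}^{|Z|} min{ δ(x,y,t) : (x,y) with p_{XY}(x,y) > 0 } over all functions δ : X×Y×{1,…,|Z|} → [0,∞) such that Σ_{t=1}^{|Z|} δ(x,y,t) = 1 for every (x,y) and, for every t, the |X|×|Y| matrix with entries p_{XY}(x,y)·δ(x,y,t) has rank at most one. -/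

import Mathlib

/-- A probability mass function on a finite set `S`. -/
def IsPMF {S : Type*} [Fintype S] (p : S → ℝ) : Prop :=
  (∀ s, 0 ≤ p s) ∧ ∑ s, p s = 1

/-- Mutual information `I(A;B)` of a joint (sub)pmf on `A × B`, with the convention
`0·log 0 = 0` (automatic for real multiplication since `Real.log 0 = 0`). -/
noncomputable def MI {A B : Type} [Fintype A] [Fintype B] (p : A → B → ℝ) : ℝ :=
  ∑ a, ∑ b, p a b * Real.log (p a b / ((∑ b', p a b') * (∑ a', p a' b)))

/-- Conditional mutual information `I(A;B|V) = Σ_v p(v)·I(A;B|V=v)` of a joint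
(sub)pmf on `V × A × B`. -/
noncomputable def condMI {V A B : Type} [Fintype V] [Fintype A] [Fintype B]
    (p : V → A → B → ℝ) : ℝ :=
  ∑ v, (∑ a, ∑ b, p v a b) * MI (fun a b => p v a b / (∑ a', ∑ b', p v a' b'))

open Classical in
/-- The erasure source with base pmf `p_XY` and erasure probability `ε`: Eve's
alphabet is `Z = {e} ⊔ (X × Y)`, modelled as `Option (X × Y)` with `e = none`. -/
noncomputable def erasureSource {X Y : Type} [Fintype X] [Fintype Y]
    (pXY : X → Y → ℝ) (ε : ℝ) : X → Y → Option (X × Y) → ℝ :=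
  fun x y z =>
    match z with
    | none => ε * pXY x y
    | some w => if w = (x, y) then (1 - ε) * pXY x y else 0

/-- `ε₃(p, M)`: the supremum of `Σ_{t=1}^{M} min{δ(x,y,t) : p(x,y) > 0}` over all
`δ : X×Y×{1,…,M} → [0,∞)` with `Σ_t δ(x,y,t) = 1` for every `(x,y)` and such that,
for every `t`, the matrix `[p(x,y)·δ(x,y,t)]` has rank at most one. -/
noncomputable def eps3 {X Y : Type} [Fintype X] [Fintype Y]
    (p : X → Y → ℝ) (M : ℕ) : ℝ :=
  sSup { r : ℝ | ∃ δ : X → Y → Fin M → ℝ,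
    (∀ x y t, 0 ≤ δ x y t) ∧
    (∀ x y, ∑ t, δ x y t = 1) ∧
    (∀ t, (Matrix.of fun x y => p x y * δ x y t).rank ≤ 1) ∧
    r = ∑ t, ⨅ xy : {xy : X × Y // 0 < p xy.1 xy.2}, δ xy.1.1 xy.1.2 t }

/-- The intrinsic mutual information `B₀(X;Y‖Z)`: the minimum over finite sets `J`
with `|J| ≤ |Z|` and channels `p(j|z)` of `I(X;Y|J)`, computed under
`p_XYZ(x,y,z)·p(j|z)`. -/
noncomputable def B0 {X Y Z : Type} [Fintype X] [Fintype Y] [Fintype Z]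
    (p : X → Y → Z → ℝ) : ℝ :=
  sInf { r : ℝ | ∃ (J : Type) (iJ : Fintype J) (W : Z → J → ℝ), by
    letI := iJ
    exact Fintype.card J ≤ Fintype.card Z ∧
      (∀ z, (∀ j, 0 ≤ W z j) ∧ ∑ j, W z j = 1) ∧
      r = condMI (fun j x y => ∑ z, p x y z * W z j) }

/-!
`B₀ = 0` iff some channel `W : Z → J` makes every slice `j ↦ p(x,y,j)` a product distribution,
i.e. a matrix of rank at most one (the equality case of Gibbs' inequality, `klFun ≥ 0` with
equality only at `1`); the infimum defining `B₀` is attained by compactness once `J` is padded to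
`Fin |Z|` with empty symbols. For the erasure source, slice `j` is `p(x,y) δ(x,y,j)` with
`δ(x,y,·) = ε W(e,·) + (1-ε) W((x,y),·)`, so such a `W` gives a feasible `δ` for `ε₃` with
`Σ_j min δ(·,·,j) ≥ ε Σ_j W(e,j) = ε`. Conversely, from a maximiser `δ` of `ε₃` of value `≥ ε`,
split off a vector `a ≤ min δ` of mass `ε`: take `W(e,·) = a/ε` and
`W((x,y),·) = (δ(x,y,·) - a)/(1-ε)`.
-/
open Finset Real InformationTheory Function

lemma mul_klFun_div {p q : ℝ} (hq : q = 0 → p = 0) :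
    q * klFun (p / q) = p * log (p / q) - p + q := by
  rcases eq_or_ne q 0 with rfl | hq0
  · simp [hq rfl]
  · rw [klFun_apply]
    field_simp
    ring

lemma Matrix.rank_le_one_iff {m n K : Type*} [Fintype m] [Fintype n] [Field K]
    (A : Matrix m n K) : A.rank ≤ 1 ↔ ∀ i i' j j', A i j * A i' j' = A i j' * A i' j := by
  classical
  constructor
  · intro h
    obtain ⟨u, hu⟩ := finrank_le_one_iff.mp h
    have hcol : ∀ j, ∃ c : K, ∀ i, A i j = c * u.1 i := fun j => by
      obtain ⟨c, hc⟩ := hu ⟨A.mulVec (Pi.single j 1), Pi.single j 1, rfl⟩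
      exact ⟨c, fun i => by
        simpa [Matrix.mulVec_single] using (congrFun (congrArg Subtype.val hc) i).symm⟩
    choose c hc using hcol
    intro i i' j j'
    simp only [hc]
    ring
  · intro h
    rcases eq_or_ne A 0 with rfl | h0
    · simp
    obtain ⟨i₀, j₀, hA⟩ : ∃ i j, A i j ≠ 0 := by
      by_contra! hc
      exact h0 (Matrix.ext hc)
    have : A = Matrix.vecMulVec (fun i => A i j₀ / A i₀ j₀) (A i₀) := by
      ext i j
      rw [Matrix.vecMulVec_apply, div_mul_eq_mul_div, eq_div_iff hA, h]
    rw [this]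
    exact Matrix.rank_vecMulVec_le _ _

section WeightedMI

variable {A B : Type}

lemma le_sum_row [Fintype B] {g : A → B → ℝ} (hg : ∀ a b, 0 ≤ g a b) (a : A) (b : B) :
    g a b ≤ ∑ b', g a b' :=
  single_le_sum (fun b' _ => hg a b') (mem_univ b)

lemma le_sum_col [Fintype A] {g : A → B → ℝ} (hg : ∀ a b, 0 ≤ g a b) (a : A) (b : B) :
    g a b ≤ ∑ a', g a' b :=
  single_le_sum (fun a' _ => hg a' b) (mem_univ a)

variable [Fintype A] [Fintype B]

lemma le_sum_sum {g : A → B → ℝ} (hg : ∀ a b, 0 ≤ g a b) (a : A) (b : B) :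
    g a b ≤ ∑ a', ∑ b', g a' b' :=
  (le_sum_row hg a b).trans
    (single_le_sum (fun a' _ => sum_nonneg fun b' _ => hg a' b') (mem_univ a))

noncomputable def weightedMI (g : A → B → ℝ) : ℝ :=
  (∑ a, ∑ b, g a b) * MI (fun a b => g a b / ∑ a', ∑ b', g a' b')

noncomputable def marginalProduct (g : A → B → ℝ) (a : A) (b : B) : ℝ :=
  (∑ b', g a b') * (∑ a', g a' b) / ∑ a', ∑ b', g a' b'

lemma condMI_eq_sum_weightedMI {V : Type} [Fintype V] (q : V → A → B → ℝ) :
    condMI q = ∑ v, weightedMI (q v) := rfl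

variable {g : A → B → ℝ}

lemma marginalProduct_nonneg (hg : ∀ a b, 0 ≤ g a b) (a : A) (b : B) :
    0 ≤ marginalProduct g a b :=
  div_nonneg (mul_nonneg ((hg a b).trans (le_sum_row hg a b)) ((hg a b).trans (le_sum_col hg a b)))
    ((hg a b).trans (le_sum_sum hg a b))

lemma eq_zero_of_marginalProduct_eq_zero (hg : ∀ a b, 0 ≤ g a b) {a : A} {b : B}
    (h : marginalProduct g a b = 0) : g a b = 0 := by
  refine le_antisymm ?_ (hg a b)
  rcases div_eq_zero_iff.mp h with h | h
  · rcases mul_eq_zero.mp h with h | h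
    · exact h ▸ le_sum_row hg a b
    · exact h ▸ le_sum_col hg a b
  · exact h ▸ le_sum_sum hg a b

lemma sum_sum_marginalProduct (g : A → B → ℝ) :
    ∑ a, ∑ b, marginalProduct g a b = ∑ a, ∑ b, g a b := by
  simp only [marginalProduct, ← sum_div, ← mul_sum, ← sum_mul]
  rw [sum_comm (f := fun a b => g a b)]
  exact mul_self_div_self _

lemma weightedMI_eq_sum_mul_log (hg : ∀ a b, 0 ≤ g a b) :
    weightedMI g = ∑ a, ∑ b, g a b * log (g a b / marginalProduct g a b) := by
  rw [weightedMI, MI, mul_sum]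
  refine sum_congr rfl fun a _ => ?_
  rw [mul_sum]
  refine sum_congr rfl fun b _ => ?_
  rcases (hg a b).eq_or_lt with h | h
  · simp [← h]
  have hT := h.trans_le (le_sum_sum hg a b)
  rw [← sum_div, ← sum_div, marginalProduct]
  field_simp

lemma weightedMI_eq_sum_klFun (hg : ∀ a b, 0 ≤ g a b) :
    weightedMI g = ∑ a, ∑ b, marginalProduct g a b * klFun (g a b / marginalProduct g a b) := by
  simp only [mul_klFun_div (eq_zero_of_marginalProduct_eq_zero hg), sum_add_distrib,
    sum_sub_distrib, sum_sum_marginalProduct, weightedMI_eq_sum_mul_log hg]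
  ring

lemma weightedMI_nonneg (hg : ∀ a b, 0 ≤ g a b) : 0 ≤ weightedMI g := by
  rw [weightedMI_eq_sum_klFun hg]
  exact sum_nonneg fun a _ => sum_nonneg fun b _ => mul_nonneg (marginalProduct_nonneg hg a b)
    (klFun_nonneg (div_nonneg (hg a b) (marginalProduct_nonneg hg a b)))

lemma weightedMI_eq_zero_iff (hg : ∀ a b, 0 ≤ g a b) :
    weightedMI g = 0 ↔ ∀ a b, g a b = marginalProduct g a b := by
  have hterm : ∀ a b, 0 ≤ marginalProduct g a b * klFun (g a b / marginalProduct g a b) :=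
    fun a b => mul_nonneg (marginalProduct_nonneg hg a b)
      (klFun_nonneg (div_nonneg (hg a b) (marginalProduct_nonneg hg a b)))
  rw [weightedMI_eq_sum_klFun hg, Fintype.sum_eq_zero_iff_of_nonneg
    (fun a => sum_nonneg fun b _ => hterm a b), funext_iff]
  refine forall_congr' fun a => ?_
  rw [Pi.zero_apply, Fintype.sum_eq_zero_iff_of_nonneg (hterm a), funext_iff]
  refine forall_congr' fun b => ?_
  rcases eq_or_ne (marginalProduct g a b) 0 with h | h
  · simp [h, eq_zero_of_marginalProduct_eq_zero hg h]
  · rw [Pi.zero_apply, mul_eq_zero, or_iff_right h, klFun_eq_zero_iff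
      (div_nonneg (hg a b) (marginalProduct_nonneg hg a b)), div_eq_one_iff_eq h]

lemma eq_marginalProduct_iff (hg : ∀ a b, 0 ≤ g a b) :
    (∀ a b, g a b = marginalProduct g a b) ↔
      ∀ a a' b b', g a b * g a' b' = g a b' * g a' b := by
  constructor
  · intro h a a' b b'
    rw [h a b, h a' b', h a b', h a' b]
    simp only [marginalProduct]
    ring
  · intro h a b
    have hT : 0 ≤ ∑ a, ∑ b, g a b := sum_nonneg fun a _ => sum_nonneg fun b _ => hg a b
    rcases hT.eq_or_lt with hT | hT
    · simp [marginalProduct, ← hT, le_antisymm (hT ▸ le_sum_sum hg a b) (hg a b)]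
    rw [marginalProduct, eq_div_iff hT.ne', sum_mul_sum, sum_comm, mul_sum]
    refine sum_congr rfl fun b' _ => ?_
    rw [mul_sum]
    exact sum_congr rfl fun a' _ => h a a' b b'

lemma weightedMI_eq_zero_iff_rank_le_one (hg : ∀ a b, 0 ≤ g a b) :
    weightedMI g = 0 ↔ (Matrix.of g).rank ≤ 1 := by
  rw [weightedMI_eq_zero_iff hg, eq_marginalProduct_iff hg, Matrix.rank_le_one_iff]
  rfl

lemma weightedMI_eq_entropy (hg : ∀ a b, 0 ≤ g a b) :
    weightedMI g = ∑ a, ∑ b, g a b * log (g a b)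
      - ∑ a, (∑ b, g a b) * log (∑ b, g a b) - ∑ b, (∑ a, g a b) * log (∑ a, g a b)
      + (∑ a, ∑ b, g a b) * log (∑ a, ∑ b, g a b) := by
  have hterm : ∀ a b, g a b * log (g a b / marginalProduct g a b) =
      g a b * log (g a b) - g a b * log (∑ b', g a b') - g a b * log (∑ a', g a' b)
        + g a b * log (∑ a', ∑ b', g a' b') := fun a b => by
    rcases (hg a b).eq_or_lt with h | h
    · simp [← h]
    have hr := h.trans_le (le_sum_row hg a b)
    have hc := h.trans_le (le_sum_col hg a b)
    have hT := h.trans_le (le_sum_sum hg a b)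
    rw [marginalProduct, log_div h.ne' (by positivity), log_div (by positivity) hT.ne',
      log_mul hr.ne' hc.ne']
    ring
  simp only [weightedMI_eq_sum_mul_log hg, hterm, sum_add_distrib, sum_sub_distrib]
  rw [sum_comm (f := fun a b => g a b * log (∑ a', g a' b))]
  simp only [← sum_mul]

lemma continuousOn_weightedMI :
    ContinuousOn (weightedMI : (A → B → ℝ) → ℝ) {g | ∀ a b, 0 ≤ g a b} :=
  ContinuousOn.congr (Continuous.continuousOn (by fun_prop)) fun _ hg => weightedMI_eq_entropy hg

end WeightedMI

section CondMI

variable {V A B : Type} [Fintype V] [Fintype A] [Fintype B] {q : V → A → B → ℝ}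

lemma condMI_nonneg (hq : ∀ v a b, 0 ≤ q v a b) : 0 ≤ condMI q :=
  sum_nonneg fun v _ => weightedMI_nonneg (hq v)

lemma condMI_eq_zero_iff (hq : ∀ v a b, 0 ≤ q v a b) :
    condMI q = 0 ↔ ∀ v, (Matrix.of (q v)).rank ≤ 1 := by
  rw [condMI_eq_sum_weightedMI, Fintype.sum_eq_zero_iff_of_nonneg
    (fun v => weightedMI_nonneg (hq v)), funext_iff]
  exact forall_congr' fun v => weightedMI_eq_zero_iff_rank_le_one (hq v)

lemma continuousOn_condMI :
    ContinuousOn (condMI : (V → A → B → ℝ) → ℝ) {q | ∀ v a b, 0 ≤ q v a b} :=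
  continuousOn_finsetSum _ fun v _ =>
    continuousOn_weightedMI.comp (continuous_apply v).continuousOn fun _ hq => hq v

end CondMI

section Extend

variable {J K : Type} [Fintype J] [Fintype K] {e : J → K}

lemma sum_extend_zero {M : Type*} [AddCommMonoid M] (he : Injective e) (f : J → M) :
    ∑ k, extend e f 0 k = ∑ j, f j :=
  (Fintype.sum_of_injective e he f _ (fun k hk => extend_apply' f (0 : K → M) k (by simpa using hk))
    fun j => (he.extend_apply f 0 j).symm).symm

lemma extend_mem_stdSimplex (he : Injective e) {w : J → ℝ} (hw : w ∈ stdSimplex ℝ J) :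
    extend e w 0 ∈ stdSimplex ℝ K := by
  refine ⟨fun k => ?_, (sum_extend_zero he w).trans hw.2⟩
  by_cases hk : ∃ j, e j = k
  · obtain ⟨j, rfl⟩ := hk
    rw [he.extend_apply]
    exact hw.1 j
  · rw [extend_apply' _ _ _ hk]
    rfl

lemma condMI_extend {A B : Type} [Fintype A] [Fintype B] (he : Injective e)
    (q : J → A → B → ℝ) : condMI (extend e q 0) = condMI q := by
  rw [condMI_eq_sum_weightedMI, condMI_eq_sum_weightedMI, ← sum_extend_zero he]
  refine sum_congr rfl fun k _ => ?_
  have hzero : weightedMI ∘ (0 : K → A → B → ℝ) = 0 := funext fun _ => by simp [weightedMI]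
  rw [apply_extend weightedMI, hzero]
  rfl

end Extend

section B0

variable {X Y Z : Type} [Fintype X] [Fintype Y] [Fintype Z] {p : X → Y → Z → ℝ}

lemma B0_eq_sInf_image :
    B0 p = sInf ((fun W : Z → Fin (Fintype.card Z) → ℝ =>
      condMI fun t x y => ∑ z, p x y z * W z t) '' Set.univ.pi fun _ => stdSimplex ℝ _) := by
  refine congrArg sInf (Set.ext fun r => ⟨?_, ?_⟩)
  · rintro ⟨J, iJ, W, hJ, hW, rfl⟩
    obtain ⟨e⟩ : Nonempty (J ↪ Fin (Fintype.card Z)) :=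
      Function.Embedding.nonempty_of_card_le (by simpa using hJ)
    refine ⟨fun z => extend e (W z) 0, fun z _ => extend_mem_stdSimplex e.injective (hW z), ?_⟩
    rw [← condMI_extend e.injective (fun j x y => ∑ z, p x y z * W z j)]
    refine congrArg condMI (funext fun k => funext fun x => funext fun y => ?_)
    by_cases hk : ∃ j, e j = k
    · obtain ⟨j, rfl⟩ := hk
      simp only [e.injective.extend_apply]
    · simp only [extend_apply' _ _ _ hk, Pi.zero_apply, mul_zero, sum_const_zero]
  · rintro ⟨W, hW, rfl⟩
    exact ⟨Fin (Fintype.card Z), inferInstance, W, by simp, fun z => hW z trivial, rfl⟩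

lemma exists_condMI_eq_B0 [Nonempty Z] (hp : ∀ x y z, 0 ≤ p x y z) :
    ∃ W ∈ Set.univ.pi fun _ => stdSimplex ℝ (Fin (Fintype.card Z)),
      condMI (fun t x y => ∑ z, p x y z * W z t) = B0 p := by
  set K := Set.univ.pi fun _ : Z => stdSimplex ℝ (Fin (Fintype.card Z))
  have hK : IsCompact K := isCompact_univ_pi fun _ => isCompact_stdSimplex ℝ _
  have hKne : K.Nonempty := Set.univ_pi_nonempty_iff.2 fun _ =>
    ⟨_, single_mem_stdSimplex ℝ ⟨0, Fintype.card_pos⟩⟩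
  have hF : ContinuousOn (fun W : Z → Fin (Fintype.card Z) → ℝ =>
      condMI fun t x y => ∑ z, p x y z * W z t) K :=
    continuousOn_condMI.comp (Continuous.continuousOn (by fun_prop)) fun W hW t x y =>
      sum_nonneg fun z _ => mul_nonneg (hp x y z) ((hW z trivial).1 t)
  rw [B0_eq_sInf_image]
  exact (hK.image_of_continuousOn hF).sInf_mem (hKne.image _)

lemma B0_eq_zero_iff_exists_rank_le_one [Nonempty Z] (hp : ∀ x y z, 0 ≤ p x y z) {N : ℕ}
    (hN : Fintype.card Z = N) :
    B0 p = 0 ↔ ∃ W : Z → Fin N → ℝ, (∀ z, W z ∈ stdSimplex ℝ (Fin N)) ∧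
      ∀ t, (Matrix.of fun x y => ∑ z, p x y z * W z t).rank ≤ 1 := by
  subst hN
  have hjoint : ∀ W : Z → Fin (Fintype.card Z) → ℝ, (∀ z, W z ∈ stdSimplex ℝ _) →
      ∀ t x y, 0 ≤ ∑ z, p x y z * W z t := fun W hW t x y =>
    sum_nonneg fun z _ => mul_nonneg (hp x y z) ((hW z).1 t)
  obtain ⟨W₀, hW₀, hW₀B⟩ := exists_condMI_eq_B0 hp
  constructor
  · intro h
    exact ⟨W₀, fun z => hW₀ z trivial,
      (condMI_eq_zero_iff (hjoint W₀ fun z => hW₀ z trivial)).1 (hW₀B.trans h)⟩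
  · rintro ⟨W, hW, hrank⟩
    refine le_antisymm ?_ (hW₀B ▸ condMI_nonneg (hjoint W₀ fun z => hW₀ z trivial))
    rw [B0_eq_sInf_image]
    refine csInf_le ⟨0, ?_⟩ ⟨W, fun z _ => hW z, (condMI_eq_zero_iff (hjoint W hW)).2 hrank⟩
    rintro _ ⟨W', hW', rfl⟩
    exact condMI_nonneg (hjoint W' fun z => hW' z trivial)

end B0

section Eps3

variable {X Y : Type} [Fintype X] [Fintype Y] {T : Type} [Fintype T] (p : X → Y → ℝ)

noncomputable def supportMinSum (δ : X → Y → T → ℝ) : ℝ :=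
  ∑ t, ⨅ xy : {xy : X × Y // 0 < p xy.1 xy.2}, δ xy.1.1 xy.1.2 t

def eps3Feasible (T : Type) [Fintype T] : Set (X → Y → T → ℝ) :=
  {δ | ∀ x y, δ x y ∈ stdSimplex ℝ T} ∩
    {δ | ∀ t, (Matrix.of fun x y => p x y * δ x y t).rank ≤ 1}

lemma eps3_eq_sSup_image (M : ℕ) :
    eps3 p M = sSup (supportMinSum p '' eps3Feasible p (Fin M)) := by
  refine congrArg sSup (Set.ext fun r => ⟨?_, ?_⟩)
  · rintro ⟨δ, h0, h1, hrank, rfl⟩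
    exact ⟨δ, ⟨fun x y => ⟨h0 x y, h1 x y⟩, hrank⟩, rfl⟩
  · rintro ⟨δ, ⟨hδ, hrank⟩, rfl⟩
    exact ⟨δ, fun x y => (hδ x y).1, fun x y => (hδ x y).2, hrank, rfl⟩

lemma isCompact_eps3Feasible : IsCompact (eps3Feasible p T) := by
  have hpi : {δ : X → Y → T → ℝ | ∀ x y, δ x y ∈ stdSimplex ℝ T} =
      Set.univ.pi fun _ => Set.univ.pi fun _ => stdSimplex ℝ T := by
    ext
    simp [Set.mem_pi]
  refine (hpi ▸ isCompact_univ_pi fun _ => isCompact_univ_pi fun _ =>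
    isCompact_stdSimplex ℝ T).inter_right ?_
  simp only [Matrix.rank_le_one_iff, Matrix.of_apply, Set.ofPred_forall]
  exact isClosed_iInter fun t => isClosed_iInter fun x => isClosed_iInter fun x' =>
    isClosed_iInter fun y => isClosed_iInter fun y' =>
      isClosed_eq (by fun_prop) (by fun_prop)

lemma eps3Feasible_nonempty (hT : Fintype.card X * Fintype.card Y ≤ Fintype.card T) :
    (eps3Feasible p T).Nonempty := by
  classical
  obtain ⟨e⟩ : Nonempty (X × Y ↪ T) :=
    Function.Embedding.nonempty_of_card_le (by rwa [Fintype.card_prod])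
  refine ⟨fun x y t => if e (x, y) = t then 1 else 0,
    fun x y => ite_eq_mem_stdSimplex ℝ (e (x, y)), fun t => ?_⟩
  rw [Matrix.rank_le_one_iff]
  intro x x' y y'
  simp only [Matrix.of_apply]
  rcases eq_or_ne x x' with rfl | hx
  · ring
  have hzero : ∀ b b', (if e (x, b) = t then (1 : ℝ) else 0) *
      (if e (x', b') = t then 1 else 0) = 0 := fun b b' => by
    by_cases h : e (x, b) = t
    · have hne : e (x', b') ≠ t := fun h' => hx (congrArg Prod.fst (e.injective (h.trans h'.symm)))
      rw [if_neg hne, mul_zero]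
    · rw [if_neg h, zero_mul]
  linear_combination (p x y * p x' y') * hzero y y' - (p x y' * p x' y) * hzero y' y

variable {p}

lemma continuous_supportMinSum (hp : ∃ x y, 0 < p x y) :
    Continuous (supportMinSum p : (X → Y → T → ℝ) → ℝ) := by
  obtain ⟨x, y, h⟩ := hp
  have : Nonempty {xy : X × Y // 0 < p xy.1 xy.2} := ⟨⟨(x, y), h⟩⟩
  refine continuous_finsetSum _ fun t _ => ?_
  simp only [← inf'_univ_eq_ciInf]
  fun_prop

lemma le_eps3_iff (hp : ∃ x y, 0 < p x y) {M : ℕ}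
    (hM : Fintype.card X * Fintype.card Y ≤ M) {ε : ℝ} :
    ε ≤ eps3 p M ↔ ∃ δ ∈ eps3Feasible p (Fin M), ε ≤ supportMinSum p δ := by
  have hK := (isCompact_eps3Feasible p).image (continuous_supportMinSum (T := Fin M) hp)
  rw [eps3_eq_sSup_image]
  constructor
  · intro h
    obtain ⟨δ, hδ, hδmax⟩ := hK.sSup_mem ((eps3Feasible_nonempty p (by simpa using hM)).image _)
    exact ⟨δ, hδ, hδmax ▸ h⟩
  · rintro ⟨δ, hδ, h⟩
    exact h.trans (le_csSup hK.bddAbove ⟨δ, hδ, rfl⟩)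

end Eps3

section Simplex

variable {T : Type} [Fintype T]

lemma exists_le_sum_eq {m : T → ℝ} (hm : 0 ≤ m) {ε : ℝ} (hε : 0 ≤ ε) (hle : ε ≤ ∑ t, m t) :
    ∃ a, 0 ≤ a ∧ a ≤ m ∧ ∑ t, a t = ε := by
  have hS : 0 ≤ ∑ t, m t := sum_nonneg fun t _ => hm t
  refine ⟨(ε / ∑ t, m t) • m, smul_nonneg (div_nonneg hε hS) hm,
    fun t => mul_le_of_le_one_left (hm t) (div_le_one_of_le₀ hle hS), ?_⟩
  simp only [Pi.smul_apply, smul_eq_mul, ← mul_sum]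
  exact div_mul_cancel_of_imp fun h => le_antisymm (h ▸ hle) hε

lemma exists_mem_stdSimplex_smul_eq {a : T → ℝ} (ha : 0 ≤ a) {ε : ℝ} (hsum : ∑ t, a t = ε)
    (hne : (stdSimplex ℝ T).Nonempty) : ∃ w ∈ stdSimplex ℝ T, ε • w = a := by
  rcases (hsum ▸ sum_nonneg fun t _ => ha t : 0 ≤ ε).eq_or_lt with rfl | hε
  · obtain ⟨w, hw⟩ := hne
    exact ⟨w, hw, by rw [zero_smul, ((Fintype.sum_eq_zero_iff_of_nonneg ha).1 hsum)]⟩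
  · refine ⟨ε⁻¹ • a, ⟨fun t => mul_nonneg (inv_nonneg.2 hε.le) (ha t), ?_⟩, smul_inv_smul₀ hε.ne' a⟩
    simp [← mul_sum, hsum, hε.ne']

lemma exists_mem_stdSimplex_add_smul_eq {a d : T → ℝ} (had : a ≤ d) (hd : d ∈ stdSimplex ℝ T)
    {ε : ℝ} (hsum : ∑ t, a t = ε) : ∃ w ∈ stdSimplex ℝ T, a + (1 - ε) • w = d := by
  have hε : ε ≤ 1 := hsum ▸ hd.2 ▸ sum_le_sum fun t _ => had t
  rcases hε.eq_or_lt with rfl | hε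
  · refine ⟨d, hd, ?_⟩
    have : d - a = 0 := (Fintype.sum_eq_zero_iff_of_nonneg (sub_nonneg.2 had)).1 <| by
      simp [sum_sub_distrib, hd.2, hsum]
    rw [sub_self, zero_smul, add_zero, ← sub_eq_zero.1 this]
  · have h1 : 0 < 1 - ε := sub_pos.2 hε
    refine ⟨(1 - ε)⁻¹ • (d - a),
      ⟨fun t => mul_nonneg (inv_nonneg.2 h1.le) (sub_nonneg.2 (had t)), ?_⟩, ?_⟩
    · simp [← mul_sum, sum_sub_distrib, hd.2, hsum, h1.ne']
    · rw [smul_inv_smul₀ h1.ne', add_sub_cancel]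

end Simplex

section Erasure

variable {X Y T : Type} {ε : ℝ}

lemma erasureSource_nonneg [Fintype X] [Fintype Y] {pXY : X → Y → ℝ} (hp : ∀ x y, 0 ≤ pXY x y)
    (hε : ε ∈ Set.Icc 0 1) :
    ∀ x y z, 0 ≤ erasureSource pXY ε x y z := by
  rintro x y (_ | w)
  · exact mul_nonneg hε.1 (hp x y)
  · simp only [erasureSource]
    split_ifs
    exacts [mul_nonneg (sub_nonneg.2 hε.2) (hp x y), le_rfl]

noncomputable def erasedChannel (ε : ℝ) (W : Option (X × Y) → T → ℝ) (x : X) (y : Y) : T → ℝ :=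
  ε • W none + (1 - ε) • W (some (x, y))

lemma sum_erasureSource_mul [Fintype X] [Fintype Y] (pXY : X → Y → ℝ) (ε : ℝ)
    (W : Option (X × Y) → T → ℝ) (t : T) (x : X) (y : Y) :
    ∑ z, erasureSource pXY ε x y z * W z t = pXY x y * erasedChannel ε W x y t := by
  simp only [erasureSource, Fintype.sum_option, ite_mul, zero_mul, sum_ite_eq', mem_univ,
    if_true, erasedChannel, Pi.add_apply, Pi.smul_apply, smul_eq_mul]
  ring

lemma erasedChannel_mem_stdSimplex [Fintype T] (hε : ε ∈ Set.Icc 0 1) {W : Option (X × Y) → T → ℝ}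
    (hW : ∀ z, W z ∈ stdSimplex ℝ T) (x : X) (y : Y) : erasedChannel ε W x y ∈ stdSimplex ℝ T :=
  convex_stdSimplex ℝ T (hW none) (hW _) hε.1 (sub_nonneg.2 hε.2) (add_sub_cancel _ _)

lemma exists_erasedChannel_eq_iff [Fintype X] [Fintype Y] [Fintype T] (hε : ε ∈ Set.Icc 0 1)
    {p : X → Y → ℝ} (hp : ∃ x y, 0 < p x y) {δ : X → Y → T → ℝ} (hδ : ∀ x y, δ x y ∈ stdSimplex ℝ T) :
    (∃ W : Option (X × Y) → T → ℝ, (∀ z, W z ∈ stdSimplex ℝ T) ∧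
      ∀ x y, 0 < p x y → erasedChannel ε W x y = δ x y) ↔ ε ≤ supportMinSum p δ := by
  obtain ⟨x₀, y₀, hxy₀⟩ := hp
  have : Nonempty {xy : X × Y // 0 < p xy.1 xy.2} := ⟨⟨(x₀, y₀), hxy₀⟩⟩
  constructor
  · rintro ⟨W, hW, hWδ⟩
    calc ε = ∑ t, ε * W none t := by rw [← mul_sum, (hW none).2, mul_one]
      _ ≤ supportMinSum p δ := sum_le_sum fun t _ => le_ciInf fun ⟨(x, y), hxy⟩ => by
        rw [← hWδ x y hxy]
        exact le_add_of_nonneg_right (mul_nonneg (sub_nonneg.2 hε.2) ((hW _).1 t))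
  · intro hle
    obtain ⟨a, ha₀, ham, hsum⟩ := exists_le_sum_eq
      (m := fun t => ⨅ xy : {xy : X × Y // 0 < p xy.1 xy.2}, δ xy.1.1 xy.1.2 t)
      (fun t => le_ciInf fun xy => (hδ xy.1.1 xy.1.2).1 t) hε.1 hle
    obtain ⟨w₀, hw₀, hεw₀⟩ := exists_mem_stdSimplex_smul_eq ha₀ hsum ⟨_, hδ x₀ y₀⟩
    have hw : ∀ xy : X × Y, ∃ w ∈ stdSimplex ℝ T,
        0 < p xy.1 xy.2 → a + (1 - ε) • w = δ xy.1 xy.2 := fun ⟨x, y⟩ => by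
      by_cases hxy : 0 < p x y
      · obtain ⟨w, hw, hwδ⟩ := exists_mem_stdSimplex_add_smul_eq
          (fun t => (ham t).trans (ciInf_le (Finite.bddBelow_range _) ⟨(x, y), hxy⟩))
          (hδ x y) hsum
        exact ⟨w, hw, fun _ => hwδ⟩
      · exact ⟨δ x y, hδ x y, fun h => absurd h hxy⟩
    choose w hw hwδ using hw
    refine ⟨fun z => z.elim w₀ w, ?_, fun x y hxy => ?_⟩
    · rintro (_ | xy)
      exacts [hw₀, hw xy]
    · rw [erasedChannel, Option.elim_none, Option.elim_some, hεw₀]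
      exact hwδ (x, y) hxy

end Erasure

theorem B0_eq_zero_iff_general {X Y : Type} [Fintype X] [Fintype Y]
    (pXY : X → Y → ℝ) (hnn : ∀ x y, 0 ≤ pXY x y) (hsum : ∑ x, ∑ y, pXY x y = 1)
    (ε : ℝ) (hε : ε ∈ Set.Icc (0 : ℝ) 1) :
    B0 (erasureSource pXY ε) = 0
      ↔ ε ≤ eps3 pXY (Fintype.card X * Fintype.card Y + 1) := by
  have hpos : ∃ x y, 0 < pXY x y := by
    by_contra! h
    have := sum_nonpos fun x (_ : x ∈ univ) => sum_nonpos fun y (_ : y ∈ univ) => h x y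
    linarith
  rw [B0_eq_zero_iff_exists_rank_le_one (erasureSource_nonneg hnn hε)
    (N := Fintype.card X * Fintype.card Y + 1) (by simp),
    le_eps3_iff hpos (Nat.le_succ _)]
  simp only [sum_erasureSource_mul]
  constructor
  · rintro ⟨W, hW, hrank⟩
    exact ⟨erasedChannel ε W, ⟨erasedChannel_mem_stdSimplex hε hW, hrank⟩,
      (exists_erasedChannel_eq_iff hε hpos (erasedChannel_mem_stdSimplex hε hW)).1
        ⟨W, hW, fun _ _ _ => rfl⟩⟩
  · rintro ⟨δ, ⟨hδ, hrank⟩, hle⟩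
    obtain ⟨W, hW, hWδ⟩ := (exists_erasedChannel_eq_iff hε hpos hδ).2 hle
    refine ⟨W, hW, fun t => ?_⟩
    convert hrank t using 5 with x y
    rcases (hnn x y).eq_or_lt with h | h
    · simp [← h]
    · rw [hWδ x y h]

/-- for an erasure source with base pmf `p_XY` (strictly positive
marginals) and erasure probability `ε ∈ [0,1]`, with `|Z| = |X|·|Y| + 1`, the
intrinsic mutual information `B₀(X;Y‖Z)` is zero iff `ε ≤ ε₃`. -/
theorem B0_eq_zero_iff {X Y : Type} [Fintype X] [Fintype Y]
    (pXY : X → Y → ℝ) (hnn : ∀ x y, 0 ≤ pXY x y) (hsum : ∑ x, ∑ y, pXY x y = 1)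
    (hX : ∀ x, 0 < ∑ y, pXY x y) (hY : ∀ y, 0 < ∑ x, pXY x y)
    (ε : ℝ) (hε : ε ∈ Set.Icc (0 : ℝ) 1) :
    B0 (erasureSource pXY ε) = 0
      ↔ ε ≤ eps3 pXY (Fintype.card X * Fintype.card Y + 1) :=
  B0_eq_zero_iff_general pXY hnn hsum ε hε
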